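/- Let M = (m_ij) ∈ SL(3,ℤ) have a real eigenvalue α > 1 and two non-real complex eigenvalues β and its conjugate. Let G_M be the abstract group with presentation: generators g₀, g₁, g₂, g₃ and relations gᵢgⱼ = gⱼgᵢ for 1 ≤ i, j ≤ 3 and g₀gᵢg₀⁻¹ = g₁^{m_{i1}} g₂^{m_{i2}} g₃^{m_{i3}} for i = 1, 2, 3. Then: (1) the center of G_M is trivial; (2) Γ_{G_M} equals the subgroup generated by g₁, g₂, g₃, and this subgroup is free abelian of rank 3; (3) the quotient G_M/Γ_{G_M} is infinite cyclic generated by the class of g₀. In particular G_M is not isomorphic to any group with infinite cyclic center, and not isomorphic to any group G with Γ_G non-abelian. -/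

import Mathlib

/-!
Sending `g₀ ↦ (0, 1)` and `gᵢ ↦ (eᵢ, 0)` identifies `G_M` with the semidirect product `ℤ³ ⋊ ℤ`
in which the generator of `ℤ` acts on row vectors by `v ↦ v M`. Since `1` is not an eigenvalue
of `M`, the vector `det (M - 1) • v` lies in the image of `M - 1`, i.e. it is a commutator
`[g₀, w]`; hence `ℤ³ ⊆ Γ`. Conversely the projection onto the torsion-free `ℤ` kills `Γ`, so
`Γ = ℤ³` and `G_M / Γ ≅ ℤ`. A central element `(v, k)` satisfies `v M = v`, forcing `v = 0`, and
`M ^ k = 1`, forcing `k = 0` because the eigenvalue `α > 1` is not a root of unity.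
-/

open Polynomial

/-- The relations of the fundamental group `G_M` of an Inoue surface of type `S⁰`:
generators `g₀,g₁,g₂,g₃` (indexed by `Fin 4`), relations `gᵢgⱼ = gⱼgᵢ` for
`1 ≤ i,j ≤ 3` and `g₀gᵢg₀⁻¹ = g₁^{m_{i1}} g₂^{m_{i2}} g₃^{m_{i3}}` for `i = 1,2,3`. -/
def gMRels (M : Matrix (Fin 3) (Fin 3) ℤ) : Set (FreeGroup (Fin 4)) :=
  { FreeGroup.of 1 * FreeGroup.of 2 * (FreeGroup.of 1)⁻¹ * (FreeGroup.of 2)⁻¹,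
    FreeGroup.of 1 * FreeGroup.of 3 * (FreeGroup.of 1)⁻¹ * (FreeGroup.of 3)⁻¹,
    FreeGroup.of 2 * FreeGroup.of 3 * (FreeGroup.of 2)⁻¹ * (FreeGroup.of 3)⁻¹,
    FreeGroup.of 0 * FreeGroup.of 1 * (FreeGroup.of 0)⁻¹ *
      ((FreeGroup.of 1) ^ M 0 0 * (FreeGroup.of 2) ^ M 0 1 * (FreeGroup.of 3) ^ M 0 2)⁻¹,
    FreeGroup.of 0 * FreeGroup.of 2 * (FreeGroup.of 0)⁻¹ *
      ((FreeGroup.of 1) ^ M 1 0 * (FreeGroup.of 2) ^ M 1 1 * (FreeGroup.of 3) ^ M 1 2)⁻¹,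
    FreeGroup.of 0 * FreeGroup.of 3 * (FreeGroup.of 0)⁻¹ *
      ((FreeGroup.of 1) ^ M 2 0 * (FreeGroup.of 2) ^ M 2 1 * (FreeGroup.of 3) ^ M 2 2)⁻¹ }

/-- The group `G_M`. -/
abbrev GM (M : Matrix (Fin 3) (Fin 3) ℤ) := PresentedGroup (gMRels M)

/-- For a group `G`, `GammaSub G` is the normal subgroup
`Γ_G = {g ∈ G : g mod [G,G] is of finite order}`. -/
def GammaSub (G : Type*) [Group G] : Subgroup G :=
  Subgroup.comap (Abelianization.of : G →* Abelianization G)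
    (CommGroup.torsion (Abelianization G))

instance GammaSub.normal (G : Type*) [Group G] : (GammaSub G).Normal :=
  Subgroup.Normal.comap inferInstance _

section

variable {G H : Type*} [Group G] [Group H]

lemma GammaSub.map_mem (f : G →* H) {g : G} (hg : g ∈ GammaSub G) : f g ∈ GammaSub H := by
  have := (Abelianization.map f).isOfFinOrder hg
  rwa [Abelianization.map_of] at this

lemma GammaSub.comap_mulEquiv (e : G ≃* H) : (GammaSub H).comap e.toMonoidHom = GammaSub G := by
  ext g
  refine ⟨fun hg => ?_, GammaSub.map_mem e.toMonoidHom⟩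
  simpa using GammaSub.map_mem e.symm.toMonoidHom hg

lemma GammaSub.le_ker {A : Type*} [CommGroup A] [IsMulTorsionFree A] (f : G →* A) :
    GammaSub G ≤ f.ker := fun g hg => by
  have := (Abelianization.lift f).isOfFinOrder hg
  rwa [Abelianization.lift_apply_of, isOfFinOrder_iff_eq_one] at this

lemma GammaSub.mem_of_zpow_mem_commutator {g : G} {d : ℤ} (hd : d ≠ 0)
    (hg : g ^ d ∈ commutator G) : g ∈ GammaSub G := by
  rw [← Abelianization.ker_of, MonoidHom.mem_ker, map_zpow] at hg
  exact isOfFinOrder_iff_zpow_eq_one.mpr ⟨d, hd, hg⟩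

lemma MulEquiv.center_eq_bot (e : G ≃* H) (h : Subgroup.center H = ⊥) :
    Subgroup.center G = ⊥ :=
  (Subgroup.eq_bot_iff_forall _).mpr fun g hg => by
    have : e g ∈ Subgroup.center H := MulEquivClass.apply_mem_center e hg
    rwa [h, Subgroup.mem_bot, map_eq_one_iff e e.injective] at this

lemma MonoidHom.map_zpow_apply_of_semiconj (f : G →* H) {σ : MulAut G} {τ : MulAut H}
    (h : ∀ g, f (σ g) = τ (f g)) (k : ℤ) (g : G) : f ((σ ^ k) g) = (τ ^ k) (f g) := by
  induction k using Int.induction_on generalizing g with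
  | zero => rfl
  | succ k ih => rw [zpow_add_one, zpow_add_one, MulAut.mul_apply, MulAut.mul_apply, ih, h]
  | pred k ih =>
    have h_inv : f (σ⁻¹ g) = τ⁻¹ (f g) := calc
      f (σ⁻¹ g) = τ⁻¹ (τ (f (σ⁻¹ g))) := (MulAut.inv_apply_self _ _ _).symm
      _ = τ⁻¹ (f g) := by rw [← h, MulAut.apply_inv_self]
    rw [zpow_sub_one, zpow_sub_one, MulAut.mul_apply, MulAut.mul_apply, ih, h_inv]

lemma MonoidHom.ext_ofAdd_single {ι : Type*} [Fintype ι] [DecidableEq ι]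
    {f f' : Multiplicative (ι → ℤ) →* G}
    (h : ∀ i, f (Multiplicative.ofAdd (Pi.single i 1)) =
      f' (Multiplicative.ofAdd (Pi.single i 1))) : f = f' := by
  refine MonoidHom.ext fun v => ?_
  have hv : v = ∏ i, Multiplicative.ofAdd (Pi.single i (1 : ℤ)) ^ v.toAdd i := by
    ext j
    simp [toAdd_prod, Pi.single_apply]
  rw [hv]
  exact Subgroup.prod_mem (f.eqLocus f') fun i _ => Subgroup.zpow_mem _ (h i) _

def zpowHom₃ {a b c : G} (hab : Commute a b) (hac : Commute a c) (hbc : Commute b c) :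
    Multiplicative (Fin 3 → ℤ) →* G where
  toFun v := a ^ v.toAdd 0 * b ^ v.toAdd 1 * c ^ v.toAdd 2
  map_one' := by simp
  map_mul' v w := by
    simp only [toAdd_mul, Pi.add_apply, zpow_add]
    rw [(hab.zpow_zpow (w.toAdd 0) (v.toAdd 1)).mul_mul_mul_comm,
      ((hac.zpow_zpow _ _).mul_left (hbc.zpow_zpow _ _)).mul_mul_mul_comm]

end

namespace SemidirectProduct

open scoped commutatorElement

variable {N H : Type*}

lemma commutatorElement_inr_inl [Group N] [Group H] {φ : H →* MulAut N} (h : H) (n : N) :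
    ⁅(inr h : N ⋊[φ] H), (inl n : N ⋊[φ] H)⁆ = inl (φ h n * n⁻¹) := by
  rw [commutatorElement_def, ← map_inv inr, ← inl_aut, ← map_inv inl, ← map_mul]

lemma gammaSub_le_range_inl [Group N] [CommGroup H] [IsMulTorsionFree H]
    {φ : H →* MulAut N} : GammaSub (N ⋊[φ] H) ≤ (inl : N →* N ⋊[φ] H).range :=
  range_inl_eq_ker_rightHom (φ := φ) ▸ GammaSub.le_ker (rightHom : N ⋊[φ] H →* H)

lemma inl_mem_gammaSub [Group N] [Group H] {φ : H →* MulAut N} {n m : N} {h : H} {d : ℤ}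
    (hd : d ≠ 0) (hn : n ^ d = φ h m * m⁻¹) : (inl n : N ⋊[φ] H) ∈ GammaSub (N ⋊[φ] H) := by
  refine GammaSub.mem_of_zpow_mem_commutator hd ?_
  rw [← map_zpow, hn, ← commutatorElement_inr_inl]
  exact Subgroup.commutator_mem_commutator (Subgroup.mem_top _) (Subgroup.mem_top _)

lemma center_eq_bot [CommGroup N] [Group H] {φ : H →* MulAut N} (hφ : Function.Injective φ)
    (hfix : ∀ n : N, (∀ h, φ h n = n) → n = 1) : Subgroup.center (N ⋊[φ] H) = ⊥ := by
  refine (Subgroup.eq_bot_iff_forall _).mpr fun x hx => ?_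
  rw [Subgroup.mem_center_iff] at hx
  have hright : x.right = 1 := hφ <| MulEquiv.ext fun m => by
    simpa [mul_comm m, eq_comm] using congrArg left (hx (inl m))
  have hleft : x.left = 1 := hfix _ fun h => by
    simpa [hright] using congrArg left (hx (inr h))
  exact SemidirectProduct.ext hleft hright

end SemidirectProduct

lemma IsOfFinOrder.of_mem_spectrum {K A : Type*} [Field K] [Ring A] [Algebra K A] [Nontrivial A]
    {a : A} (ha : IsOfFinOrder a) {μ : K} (hμ : μ ∈ spectrum K a) : IsOfFinOrder μ := by
  obtain ⟨k, hk, hpow⟩ := isOfFinOrder_iff_pow_eq_one.mp ha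
  have := spectrum.pow_mem_pow a k hμ
  rw [hpow, spectrum.one_eq, Set.mem_singleton_iff] at this
  exact isOfFinOrder_iff_pow_eq_one.mpr ⟨k, hk, this⟩

namespace Matrix

variable {n R K : Type*} [Fintype n] [DecidableEq n] [CommRing R] [Field K]

lemma not_isOfFinOrder_of_isRoot_charpoly [Nonempty n] {A : Matrix n n R} (f : R →+* K) {μ : K}
    (hμ : (A.map f).charpoly.IsRoot μ) (h : ¬IsOfFinOrder μ) : ¬IsOfFinOrder A := by
  intro hA
  have hfin : IsOfFinOrder (A.map f) := f.mapMatrix.toMonoidHom.isOfFinOrder hA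
  exact h (hfin.of_mem_spectrum (mem_spectrum_of_isRoot_charpoly hμ))

lemma det_sub_one_ne_zero {A : Matrix n n R} (f : R →+* K) (h : ¬(A.map f).charpoly.IsRoot 1) :
    (A - 1).det ≠ 0 := by
  intro hdet
  refine h ?_
  rw [IsRoot, charpoly_map, eval_one_map, eval_charpoly, map_one, ← neg_sub, det_neg, hdet,
    mul_zero, map_zero]

lemma eq_zero_of_vecMul_eq_self [IsDomain R] {A : Matrix n n R} (hA : (A - 1).det ≠ 0)
    {v : n → R} (hv : v ᵥ* A = v) : v = 0 := by
  by_contra hne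
  exact hA (exists_vecMul_eq_zero_iff.mp ⟨v, hne, by rw [vecMul_sub, hv, vecMul_one, sub_self]⟩)

lemma det_sub_one_smul_eq (A : Matrix n n R) (v : n → R) :
    (A - 1).det • v = (v ᵥ* (A - 1).adjugate) ᵥ* A - v ᵥ* (A - 1).adjugate := by
  have h : (v ᵥ* (A - 1).adjugate) ᵥ* (A - 1) = (A - 1).det • v := by
    rw [vecMul_vecMul, adjugate_mul, vecMul_smul, vecMul_one]
  rw [← h, vecMul_sub, vecMul_one]

noncomputable def vecMulAut (A : Matrix n n R) (hA : IsUnit A.det) :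
    MulAut (Multiplicative (n → R)) :=
  AddEquiv.toMultiplicative
    { toFun := (· ᵥ* A)
      invFun := (· ᵥ* A⁻¹)
      left_inv := fun v => by simp [vecMul_vecMul, mul_nonsing_inv _ hA]
      right_inv := fun v => by simp [vecMul_vecMul, nonsing_inv_mul _ hA]
      map_add' := fun v w => add_vecMul A v w }

variable {A : Matrix n n R} {hA : IsUnit A.det}

@[simp]
lemma vecMulAut_apply (v : Multiplicative (n → R)) :
    vecMulAut A hA v = Multiplicative.ofAdd (v.toAdd ᵥ* A) := rfl

lemma vecMulAut_pow_apply (k : ℕ) (v : Multiplicative (n → R)) :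
    (vecMulAut A hA ^ k) v = Multiplicative.ofAdd (v.toAdd ᵥ* A ^ k) := by
  induction k generalizing v with
  | zero => simp
  | succ k ih =>
    rw [pow_succ, MulAut.mul_apply, ih, vecMulAut_apply, toAdd_ofAdd, vecMul_vecMul, ← pow_succ']

lemma not_isOfFinOrder_vecMulAut (h : ¬IsOfFinOrder A) : ¬IsOfFinOrder (vecMulAut A hA) := by
  refine fun hfin => h ?_
  obtain ⟨k, hk, hpow⟩ := isOfFinOrder_iff_pow_eq_one.mp hfin
  refine isOfFinOrder_iff_pow_eq_one.mpr ⟨k, hk, ext_iff_vecMul.mpr fun v => ?_⟩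
  simpa [vecMulAut_pow_apply] using congrArg Multiplicative.toAdd
    (DFunLike.congr_fun hpow (Multiplicative.ofAdd v))

end Matrix

def HasInoueEigenvalues (M : Matrix (Fin 3) (Fin 3) ℤ) : Prop :=
  ∃ (α : ℝ) (β : ℂ), 1 < α ∧ β.im ≠ 0 ∧
    (M.map (Int.cast : ℤ → ℂ)).charpoly = (X - C (α : ℂ)) * (X - C β) * (X - C (starRingEnd ℂ β))

namespace HasInoueEigenvalues

variable {M : Matrix (Fin 3) (Fin 3) ℤ} (h : HasInoueEigenvalues M)
include h

lemma det_sub_one_ne_zero : (M - 1).det ≠ 0 := by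
  obtain ⟨α, β, hα, hβ, hchar⟩ := h
  refine Matrix.det_sub_one_ne_zero (Int.castRingHom ℂ) ?_
  have hα1 : (α : ℂ) ≠ 1 := mod_cast hα.ne'
  have hβ1 : β ≠ 1 := fun h => hβ (by simp [h])
  have hβ1' : starRingEnd ℂ β ≠ 1 := fun h => hβ (by simpa using congrArg Complex.im h)
  simp [Int.coe_castRingHom, hchar, sub_eq_zero, hα1.symm, hβ1.symm, hβ1'.symm]

lemma not_isOfFinOrder : ¬IsOfFinOrder M := by
  obtain ⟨α, β, hα, -, hchar⟩ := h
  refine Matrix.not_isOfFinOrder_of_isRoot_charpoly (Int.castRingHom ℂ) (μ := α) ?_ fun hfin => ?_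
  · simp [Int.coe_castRingHom, hchar]
  · have := hfin.norm_eq_one
    rw [Complex.norm_real, Real.norm_of_nonneg (by linarith)] at this
    linarith

end HasInoueEigenvalues

namespace GM

open SemidirectProduct

variable (M : Matrix (Fin 3) (Fin 3) ℤ)

lemma commute_of_mem (i j : Fin 4)
    (h : FreeGroup.of i * FreeGroup.of j * (FreeGroup.of i)⁻¹ * (FreeGroup.of j)⁻¹ ∈ gMRels M) :
    Commute (PresentedGroup.of i : GM M) (PresentedGroup.of j) :=
  commutatorElement_eq_one_iff_commute.mp (PresentedGroup.one_of_mem h)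

lemma conj_of_succ (i : Fin 3) :
    (PresentedGroup.of 0 : GM M) * PresentedGroup.of i.succ * (PresentedGroup.of 0)⁻¹ =
      PresentedGroup.of 1 ^ M i 0 * PresentedGroup.of 2 ^ M i 1 * PresentedGroup.of 3 ^ M i 2 := by
  refine mul_inv_eq_one.mp (PresentedGroup.one_of_mem ?_)
  fin_cases i <;> simp [gMRels]

noncomputable def lattice : Multiplicative (Fin 3 → ℤ) →* GM M :=
  zpowHom₃ (commute_of_mem M 1 2 (by simp [gMRels])) (commute_of_mem M 1 3 (by simp [gMRels]))
    (commute_of_mem M 2 3 (by simp [gMRels]))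

lemma lattice_ofAdd (v : Fin 3 → ℤ) :
    lattice M (Multiplicative.ofAdd v) =
      PresentedGroup.of 1 ^ v 0 * PresentedGroup.of 2 ^ v 1 * PresentedGroup.of 3 ^ v 2 := rfl

lemma lattice_single (i : Fin 3) :
    lattice M (Multiplicative.ofAdd (Pi.single i 1)) = PresentedGroup.of i.succ := by
  fin_cases i <;> simp [lattice_ofAdd]

lemma range_lattice : (lattice M).range =
    Subgroup.closure {PresentedGroup.of 1, PresentedGroup.of 2, PresentedGroup.of 3} := by
  apply le_antisymm
  · rintro _ ⟨v, rfl⟩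
    rw [← ofAdd_toAdd v, lattice_ofAdd]
    have hmem : ∀ i : Fin 3, (PresentedGroup.of i.succ : GM M) ∈
        Subgroup.closure {PresentedGroup.of 1, PresentedGroup.of 2, PresentedGroup.of 3} :=
      fun i => Subgroup.subset_closure (by fin_cases i <;> simp)
    exact mul_mem (mul_mem (zpow_mem (hmem 0) _) (zpow_mem (hmem 1) _)) (zpow_mem (hmem 2) _)
  · rw [Subgroup.closure_le]
    rintro _ (rfl | rfl | rfl)
    exacts [⟨_, lattice_single M 0⟩, ⟨_, lattice_single M 1⟩, ⟨_, lattice_single M 2⟩]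

variable (hM : M.det = 1)

noncomputable abbrev latticeAut : MulAut (Multiplicative (Fin 3 → ℤ)) :=
  M.vecMulAut (hM ▸ isUnit_one)

/-- The action is on row vectors because the exponents in the relation for `g₀ gᵢ g₀⁻¹` form
row `i` of `M`. -/
abbrev Model := Multiplicative (Fin 3 → ℤ) ⋊[zpowersHom _ (latticeAut M hM)] Multiplicative ℤ

lemma lattice_latticeAut (v : Multiplicative (Fin 3 → ℤ)) :
    lattice M (latticeAut M hM v) = MulAut.conj (PresentedGroup.of 0 : GM M) (lattice M v) := by
  suffices (lattice M).comp (latticeAut M hM).toMonoidHom =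
      (MulAut.conj (PresentedGroup.of 0 : GM M)).toMonoidHom.comp (lattice M) from
    DFunLike.congr_fun this v
  refine MonoidHom.ext_ofAdd_single fun i => ?_
  change lattice M (Multiplicative.ofAdd (Matrix.vecMul (Pi.single i 1) M)) =
    MulAut.conj (PresentedGroup.of 0 : GM M) (lattice M (Multiplicative.ofAdd (Pi.single i 1)))
  rw [Matrix.single_one_vecMul, lattice_single, MulAut.conj_apply, conj_of_succ]
  rfl

noncomputable def modelGen : Fin 4 → Model M hM :=
  Fin.cases (inr (Multiplicative.ofAdd 1)) fun i => inl (Multiplicative.ofAdd (Pi.single i 1))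

lemma modelGen_zero : modelGen M hM 0 = inr (Multiplicative.ofAdd 1) := rfl

lemma modelGen_succ (i : Fin 3) :
    modelGen M hM i.succ = inl (Multiplicative.ofAdd (Pi.single i 1)) := rfl

lemma inl_ofAdd (v : Fin 3 → ℤ) : (inl (Multiplicative.ofAdd v) : Model M hM) =
    modelGen M hM 1 ^ v 0 * modelGen M hM 2 ^ v 1 * modelGen M hM 3 ^ v 2 := by
  rw [show (1 : Fin 4) = Fin.succ 0 from rfl, show (2 : Fin 4) = Fin.succ 1 from rfl,
    show (3 : Fin 4) = Fin.succ 2 from rfl, modelGen_succ, modelGen_succ, modelGen_succ,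
    ← map_zpow inl, ← map_zpow inl, ← map_zpow inl, ← map_mul inl, ← map_mul inl]
  congr 1
  ext j
  fin_cases j <;> simp

lemma conj_modelGen_succ (i : Fin 3) :
    modelGen M hM 0 * modelGen M hM i.succ * (modelGen M hM 0)⁻¹ =
      modelGen M hM 1 ^ M i 0 * modelGen M hM 2 ^ M i 1 * modelGen M hM 3 ^ M i 2 := by
  rw [← inl_ofAdd, modelGen_zero, modelGen_succ, ← map_inv, ← inl_aut]
  congr 1
  exact congrArg Multiplicative.ofAdd (Matrix.single_one_vecMul i M)

lemma modelGen_rels : ∀ r ∈ gMRels M, FreeGroup.lift (modelGen M hM) r = 1 := by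
  have hcomm (i j : Fin 3) : Commute (modelGen M hM i.succ) (modelGen M hM j.succ) :=
    (Commute.all _ _).map inl
  intro r hr
  simp only [gMRels, Set.mem_insert_iff, Set.mem_singleton_iff] at hr
  rcases hr with rfl | rfl | rfl | rfl | rfl | rfl <;>
    simp only [map_mul, map_inv, map_zpow, FreeGroup.lift_apply_of]
  exacts [commutatorElement_eq_one_iff_commute.mpr (hcomm 0 1),
    commutatorElement_eq_one_iff_commute.mpr (hcomm 0 2),
    commutatorElement_eq_one_iff_commute.mpr (hcomm 1 2),
    mul_inv_eq_one.mpr (conj_modelGen_succ M hM 0), mul_inv_eq_one.mpr (conj_modelGen_succ M hM 1),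
    mul_inv_eq_one.mpr (conj_modelGen_succ M hM 2)]

noncomputable def toModel : GM M →* Model M hM := PresentedGroup.toGroup (modelGen_rels M hM)

noncomputable def ofModel : Model M hM →* GM M :=
  lift (lattice M) (zpowersHom _ (PresentedGroup.of 0)) fun k => MonoidHom.ext fun v => by
    simpa [← map_zpow] using
      (lattice M).map_zpow_apply_of_semiconj (lattice_latticeAut M hM) k.toAdd v

lemma toModel_of (i : Fin 4) : toModel M hM (PresentedGroup.of i) = modelGen M hM i :=
  PresentedGroup.toGroup.of _

lemma toModel_comp_lattice : (toModel M hM).comp (lattice M) = inl :=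
  MonoidHom.ext_ofAdd_single fun i => by
    rw [MonoidHom.comp_apply, lattice_single, toModel_of, modelGen_succ]

lemma ofModel_comp_toModel : (ofModel M hM).comp (toModel M hM) = MonoidHom.id _ :=
  PresentedGroup.ext fun i => by
    refine Fin.cases ?_ (fun i => ?_) i
    · simp [toModel_of, modelGen_zero, ofModel]
    · simp [toModel_of, modelGen_succ, ofModel, lattice_single]

lemma toModel_comp_ofModel : (toModel M hM).comp (ofModel M hM) = MonoidHom.id _ :=
  hom_ext (by rw [MonoidHom.comp_assoc, ofModel, lift_comp_inl, toModel_comp_lattice]; rfl)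
    (MonoidHom.ext_mint (by simp [ofModel, toModel_of, modelGen_zero]))

noncomputable def equivModel : GM M ≃* Model M hM :=
  (toModel M hM).toMulEquiv (ofModel M hM) (ofModel_comp_toModel M hM) (toModel_comp_ofModel M hM)

variable {M}

lemma center_model_eq_bot (hα : HasInoueEigenvalues M) : Subgroup.center (Model M hM) = ⊥ := by
  have hinj : Function.Injective fun k : ℤ => latticeAut M hM ^ k :=
    injective_zpow_iff_not_isOfFinOrder.mpr
      (Matrix.not_isOfFinOrder_vecMulAut hα.not_isOfFinOrder)
  refine SemidirectProduct.center_eq_bot (hinj.comp Multiplicative.toAdd.injective) fun v hv => ?_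
  have hfix := congrArg Multiplicative.toAdd (hv (Multiplicative.ofAdd 1))
  simp only [zpowersHom_apply, toAdd_ofAdd, zpow_one, Matrix.vecMulAut_apply] at hfix
  exact congrArg Multiplicative.ofAdd (Matrix.eq_zero_of_vecMul_eq_self hα.det_sub_one_ne_zero hfix)

lemma gammaSub_model_eq_range_inl (hα : HasInoueEigenvalues M) :
    GammaSub (Model M hM) = (inl : _ →* Model M hM).range := by
  refine le_antisymm gammaSub_le_range_inl ?_
  rintro _ ⟨v, rfl⟩
  refine inl_mem_gammaSub (h := Multiplicative.ofAdd 1)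
    (m := Multiplicative.ofAdd (Matrix.vecMul v.toAdd (M - 1).adjugate)) hα.det_sub_one_ne_zero ?_
  apply Multiplicative.toAdd.injective
  simpa [sub_eq_add_neg] using Matrix.det_sub_one_smul_eq M v.toAdd

include hM in
lemma center_eq_bot (hα : HasInoueEigenvalues M) : Subgroup.center (GM M) = ⊥ :=
  (equivModel M hM).center_eq_bot (center_model_eq_bot hM hα)

include hM in
lemma gammaSub_eq_range_lattice (hα : HasInoueEigenvalues M) :
    GammaSub (GM M) = (lattice M).range := by
  rw [← GammaSub.comap_mulEquiv (equivModel M hM), gammaSub_model_eq_range_inl hM hα,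
    ← toModel_comp_lattice M hM, MonoidHom.range_comp]
  exact Subgroup.comap_map_eq_self_of_injective (equivModel M hM).injective _

include hM in
lemma lattice_injective : Function.Injective (lattice M) := by
  have h : Function.Injective ((toModel M hM).comp (lattice M)) := by
    rw [toModel_comp_lattice]
    exact inl_injective
  exact h.of_comp (f := toModel M hM)

lemma eq_lattice_mul_zpow (x : GM M) : x =
    lattice M (toModel M hM x).left * PresentedGroup.of 0 ^ (toModel M hM x).right.toAdd := by
  calc x = ofModel M hM (toModel M hM x) := (DFunLike.congr_fun (ofModel_comp_toModel M hM) x).symm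
    _ = ofModel M hM (inl (toModel M hM x).left * inr (toModel M hM x).right) := by
      rw [inl_left_mul_inr_right]
    _ = _ := by rw [map_mul, ofModel, lift_inl, lift_inr, zpowersHom_apply]

include hM in
lemma zpowers_mk_of_zero_eq_top (hα : HasInoueEigenvalues M) :
    Subgroup.zpowers (QuotientGroup.mk' (GammaSub (GM M)) (PresentedGroup.of 0)) = ⊤ := by
  refine (Subgroup.eq_top_iff' _).mpr fun q => ?_
  induction q using QuotientGroup.induction_on with | H x =>
  have hmem : lattice M (toModel M hM x).left ∈ GammaSub (GM M) :=
    gammaSub_eq_range_lattice hM hα ▸ ⟨_, rfl⟩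
  refine Subgroup.mem_zpowers_iff.mpr ⟨(toModel M hM x).right.toAdd, ?_⟩
  conv_rhs => rw [eq_lattice_mul_zpow hM x]
  rw [QuotientGroup.mk_mul, QuotientGroup.mk_zpow, (QuotientGroup.eq_one_iff _).mpr hmem, one_mul]
  rfl

include hM in
lemma not_isOfFinOrder_mk_of_zero :
    ¬IsOfFinOrder (QuotientGroup.mk' (GammaSub (GM M)) (PresentedGroup.of 0)) := by
  let f : GM M →* Multiplicative ℤ := rightHom.comp (toModel M hM)
  intro h
  have := (QuotientGroup.lift _ f (GammaSub.le_ker f)).isOfFinOrder h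
  rw [QuotientGroup.mk'_apply, QuotientGroup.lift_mk, isOfFinOrder_iff_eq_one] at this
  simp [f, toModel_of, modelGen_zero] at this

end GM

/-- For `M ∈ SL(3,ℤ)` with one real eigenvalue `α > 1` and two non-real conjugate
eigenvalues `β, β̄`: (1) the center of `G_M` is trivial; (2) `Γ_{G_M}` is the subgroup
generated by `g₁,g₂,g₃`, which is free abelian of rank 3; (3) `G_M/Γ_{G_M}` is infinite
cyclic generated by the class of `g₀`. In particular `G_M` is not isomorphic to any
group with infinite cyclic center, nor to any group `H` with `Γ_H` non-abelian. -/
theorem stmt_19 (M : Matrix (Fin 3) (Fin 3) ℤ) (hM : M.det = 1)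
    (hα : ∃ (α : ℝ) (β : ℂ), 1 < α ∧ β.im ≠ 0 ∧
      (M.map (Int.cast : ℤ → ℂ)).charpoly =
        (X - C (α : ℂ)) * (X - C β) * (X - C (starRingEnd ℂ β))) :
    -- (1)
    Subgroup.center (GM M) = ⊥ ∧
    -- (2)
    GammaSub (GM M) =
      Subgroup.closure {PresentedGroup.of 1, PresentedGroup.of 2, PresentedGroup.of 3} ∧
    Function.Injective (fun n : Fin 3 → ℤ =>
      (PresentedGroup.of 1 : GM M) ^ n 0 * PresentedGroup.of 2 ^ n 1 *
        PresentedGroup.of 3 ^ n 2) ∧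
    Set.range (fun n : Fin 3 → ℤ =>
      (PresentedGroup.of 1 : GM M) ^ n 0 * PresentedGroup.of 2 ^ n 1 *
        PresentedGroup.of 3 ^ n 2) = (GammaSub (GM M) : Set (GM M)) ∧
    (∀ x ∈ GammaSub (GM M), ∀ y ∈ GammaSub (GM M), x * y = y * x) ∧
    -- (3)
    Subgroup.zpowers (QuotientGroup.mk' (GammaSub (GM M)) (PresentedGroup.of 0)) = ⊤ ∧
    ¬ IsOfFinOrder (QuotientGroup.mk' (GammaSub (GM M)) (PresentedGroup.of 0)) ∧
    -- in particular
    (∀ (H : Type) [Group H], Nonempty (GM M ≃* H) →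
      (¬ ∃ h : H, ¬ IsOfFinOrder h ∧ Subgroup.center H = Subgroup.zpowers h) ∧
      (∀ x ∈ GammaSub H, ∀ y ∈ GammaSub H, x * y = y * x)) := by
  have hcenter := GM.center_eq_bot hM hα
  have hΓ := GM.gammaSub_eq_range_lattice hM hα
  have hcomm : ∀ x ∈ GammaSub (GM M), ∀ y ∈ GammaSub (GM M), x * y = y * x := by
    rw [hΓ]
    rintro _ ⟨v, rfl⟩ _ ⟨w, rfl⟩
    rw [← map_mul, mul_comm, map_mul]
  refine ⟨hcenter, hΓ.trans (GM.range_lattice M),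
    (GM.lattice_injective hM).comp Multiplicative.ofAdd.injective, ?_, hcomm,
    GM.zpowers_mk_of_zero_eq_top hM hα, GM.not_isOfFinOrder_mk_of_zero hM,
    fun H _ ⟨e⟩ => ⟨?_, fun x hx y hy => ?_⟩⟩
  · rw [hΓ, MonoidHom.coe_range]
    exact Multiplicative.ofAdd.surjective.range_comp (GM.lattice M)
  · rintro ⟨h, hfin, hcen⟩
    have hh : h ∈ Subgroup.center H := hcen ▸ Subgroup.mem_zpowers h
    rw [e.symm.center_eq_bot hcenter, Subgroup.mem_bot] at hh
    exact hfin (hh ▸ IsOfFinOrder.one)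
  · apply e.symm.injective
    simpa using hcomm _ (GammaSub.map_mem e.symm.toMonoidHom hx) _
      (GammaSub.map_mem e.symm.toMonoidHom hy)
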